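/- arXiv:2103.05702 — 2 statements merged into one kernel-verified Lean document; each statement's English description precedes it below -/
import Mathlib

section
/- Let H be a complex Hilbert space and let X, Y be k-dimensional subspaces of H with dim(X ∩ Y) = k − 2. If there exist two ortho-adjacent k-dimensional subspaces Z, Z' of H such that each of Z and Z' is ortho-adjacent to both X and Y, then X and Y are compatible. -/
noncomputable section

open scoped Classical

variable {H : Type*} [NormedAddCommGroup H] [InnerProductSpace ℂ H] [CompleteSpace H]

/-- The orthogonal projection onto `X`, as an operator `H → H` (junk value `0` if the
orthogonal projection onto `X` does not exist; it always exists for finite-dimensional,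
and more generally complete, subspaces). -/
noncomputable def projOn (X : Submodule ℂ H) : H →L[ℂ] H :=
  if h : Submodule.HasOrthogonalProjection X then
    haveI := h
    X.subtypeL.comp (X.orthogonalProjectionOnto)
  else 0

/-- Two subspaces of `H` are compatible if their orthogonal projections commute. -/
def Compatible (X Y : Submodule ℂ H) : Prop :=
  projOn X * projOn Y = projOn Y * projOn X

/-- `X` is a `k`-dimensional subspace of `H`. -/
def IsDim (k : ℕ) (X : Submodule ℂ H) : Prop :=
  FiniteDimensional ℂ X ∧ Module.finrank ℂ X = k

/-- Two (distinct) `k`-dimensional subspaces are adjacent if their intersection is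
`(k-1)`-dimensional. -/
def AdjacentSub (k : ℕ) (X Y : Submodule ℂ H) : Prop :=
  X ≠ Y ∧ Module.finrank ℂ ↥(X ⊓ Y) = k - 1

/-- Ortho-adjacency: adjacent and compatible. -/
def OrthoAdjacent (k : ℕ) (X Y : Submodule ℂ H) : Prop :=
  AdjacentSub k X Y ∧ Compatible X Y

/-- The ortho-Grassmann graph `Γ⊥_k(H)` on the `k`-dimensional subspaces of `H`:
two `k`-dimensional subspaces are connected by an edge if they are ortho-adjacent. -/
def orthoGrassmannGraph (H : Type*) [NormedAddCommGroup H] [InnerProductSpace ℂ H]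
    [CompleteSpace H] (k : ℕ) : SimpleGraph {X : Submodule ℂ H // IsDim k X} where
  Adj X Y := OrthoAdjacent k X.1 Y.1
  symm := ⟨by
    rintro X Y ⟨⟨hne, hdim⟩, hc⟩
    refine ⟨⟨hne.symm, by rwa [inf_comm]⟩, ?_⟩
    unfold Compatible at hc ⊢
    exact hc.symm⟩
  loopless := ⟨fun X h => h.1.1 rfl⟩

/-- The Grassmann graph `Γ_k(H)` on the `k`-dimensional subspaces of `H`:
two `k`-dimensional subspaces are connected by an edge if they are adjacent. -/
def grassmannGraph (H : Type*) [NormedAddCommGroup H] [InnerProductSpace ℂ H]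
    [CompleteSpace H] (k : ℕ) : SimpleGraph {X : Submodule ℂ H // IsDim k X} where
  Adj X Y := AdjacentSub k X.1 Y.1
  symm := ⟨by
    rintro X Y ⟨hne, hdim⟩
    exact ⟨hne.symm, by rwa [inf_comm]⟩⟩
  loopless := ⟨fun X h => h.1 rfl⟩


/-!
Write `D = Z ⊓ Z'` and `E = Z' ⊓ Zᗮ`, both of which lie in `Z'`. Compatible subspaces split as
`S = (S ⊓ T) ⊕ (S ⊓ Tᗮ)`, and the projection onto `S ⊓ T` is `P_S P_T`. For a `k`-space `S`
ortho-adjacent to `Z` and `Z'`, splitting `S ⊓ Z'` along `Z` and counting dimensions shows that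
`S` contains `D` or `E`. Now `X` and `Y` cannot both contain `D`, since `dim D = k - 1`, nor
both contain `E`, since `X ⊓ Y ≤ Z` by a dimension count while `E ⟂ Z`. If `D ≤ X` and `E ≤ Y`,
then `X ⊓ Z = D`, `X ⊓ Z' ≤ Z` and `Y ⊓ Zᗮ = E`; splitting `P_Y = P_Y P_Z + P_{Y ⊓ Zᗮ}` gives
`P_X P_Y = P_D P_Y`, which is self-adjoint because `P_D = P_Z P_Z'` commutes with `P_Y`.
-/

open Submodule Module

theorem Submodule.inf_le_of_finrank_add_le {K V : Type*} [DivisionRing K] [AddCommGroup V]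
    [Module K V] {X Y Z : Submodule K V} [FiniteDimensional K X] [FiniteDimensional K Z]
    (h : finrank K ↥(X ⊓ Y) + finrank K Z ≤ finrank K ↥(Z ⊓ X) + finrank K ↥(Z ⊓ Y)) :
    X ⊓ Y ≤ Z := by
  have hsup := finrank_mono (sup_le inf_le_left inf_le_left : (Z ⊓ X) ⊔ (Z ⊓ Y) ≤ Z)
  have hmod := finrank_sup_add_finrank_inf_eq (Z ⊓ X) (Z ⊓ Y)
  have heq : (Z ⊓ X) ⊓ (Z ⊓ Y) = X ⊓ Y :=
    eq_of_le_of_finrank_le (inf_le_inf inf_le_right inf_le_right) (by omega)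
  exact heq ▸ inf_le_left.trans inf_le_left

section

omit [CompleteSpace H]

variable {k : ℕ} {S T Z : Submodule ℂ H}

theorem projOn_eq_starProjection (S : Submodule ℂ H) [S.HasOrthogonalProjection] :
    projOn S = S.starProjection :=
  dif_pos ‹_›

theorem compatible_iff_commute [S.HasOrthogonalProjection] [T.HasOrthogonalProjection] :
    Compatible S T ↔ Commute S.starProjection T.starProjection := by
  rw [Compatible, projOn_eq_starProjection, projOn_eq_starProjection]
  rfl

theorem Compatible.symm (h : Compatible S T) : Compatible T S :=
  Eq.symm h

theorem Compatible.orthogonal_right [S.HasOrthogonalProjection] [T.HasOrthogonalProjection]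
    (h : Compatible S T) : Compatible S Tᗮ := by
  rw [compatible_iff_commute, starProjection_orthogonal']
  exact (Commute.one_right _).sub_right (compatible_iff_commute.1 h)

theorem Compatible.starProjection_mem_inf [S.HasOrthogonalProjection]
    [T.HasOrthogonalProjection] (h : Compatible S T) {x : H} (hx : x ∈ S) :
    T.starProjection x ∈ S ⊓ T := by
  refine ⟨?_, starProjection_apply_mem T x⟩
  rw [← starProjection_eq_self_iff.2 hx, ← mul_apply_eq_comp, ← (compatible_iff_commute.1 h).eq]
  exact starProjection_apply_mem S _

theorem Compatible.finrank_inf_add_finrank_inf_orthogonal [FiniteDimensional ℂ S]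
    [T.HasOrthogonalProjection] (h : Compatible S T) :
    finrank ℂ ↥(S ⊓ T) + finrank ℂ ↥(S ⊓ Tᗮ) = finrank ℂ S := by
  have hdisj : (S ⊓ T) ⊓ (S ⊓ Tᗮ) = ⊥ :=
    eq_bot_iff.2 <| (inf_le_inf inf_le_right inf_le_right).trans (inf_orthogonal_eq_bot T).le
  have hsup : (S ⊓ T) ⊔ (S ⊓ Tᗮ) = S := by
    refine le_antisymm (sup_le inf_le_left inf_le_left) fun x hx => ?_
    rw [← starProjection_add_starProjection_orthogonal (K := T) x]
    exact add_mem (mem_sup_left (h.starProjection_mem_inf hx))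
      (mem_sup_right (h.orthogonal_right.starProjection_mem_inf hx))
  rw [← finrank_sup_add_finrank_inf_eq, hdisj, finrank_bot, add_zero, hsup]

theorem OrthoAdjacent.symm (h : OrthoAdjacent k S T) : OrthoAdjacent k T S :=
  ⟨⟨h.1.1.symm, inf_comm S T ▸ h.1.2⟩, h.2.symm⟩

theorem AdjacentSub.inf_eq_of_le (hZ : IsDim k Z) (hZS : AdjacentSub k Z S)
    (hZT : AdjacentSub k Z T) (h : Z ⊓ T ≤ S) : Z ⊓ S = Z ⊓ T :=
  have := hZ.1
  (eq_of_le_of_finrank_eq (le_inf inf_le_left h) (by rw [hZS.2, hZT.2])).symm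

theorem OrthoAdjacent.finrank_inf_orthogonal (hZ : IsDim k Z) (hS : IsDim k S)
    (h : OrthoAdjacent k Z S) : finrank ℂ ↥(S ⊓ Zᗮ) = 1 := by
  have := hZ.1
  have := hS.1
  have hk : k ≠ 0 := by
    rintro rfl
    exact h.1.1 ((finrank_eq_zero.1 hZ.2).trans (finrank_eq_zero.1 hS.2).symm)
  have := h.2.symm.finrank_inf_add_finrank_inf_orthogonal
  rw [inf_comm, h.1.2, hS.2] at this
  omega

end

section

variable {k : ℕ} {S T U X Y Z Z' : Submodule ℂ H}

instance Submodule.hasOrthogonalProjection_inf (S T : Submodule ℂ H)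
    [S.HasOrthogonalProjection] [T.HasOrthogonalProjection] :
    (S ⊓ T).HasOrthogonalProjection := by
  have isClosed (K : Submodule ℂ H) [K.HasOrthogonalProjection] : IsClosed (K : Set H) := by
    rw [← K.orthogonal_orthogonal]
    exact Kᗮ.isClosed_orthogonal
  have : CompleteSpace ↥(S ⊓ T) := ((isClosed S).inter (isClosed T)).completeSpace_coe
  infer_instance

theorem Compatible.starProjection_inf [S.HasOrthogonalProjection] [T.HasOrthogonalProjection]
    (h : Compatible S T) :
    (S ⊓ T).starProjection = S.starProjection * T.starProjection := by
  ext x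
  refine eq_starProjection_of_mem_of_inner_eq_zero ⟨starProjection_apply_mem S _, ?_⟩
    fun w hw => ?_
  · rw [(compatible_iff_commute.1 h).eq]
    exact starProjection_apply_mem T _
  · rw [inner_sub_left, mul_apply_eq_comp, inner_starProjection_left_eq_right,
      starProjection_eq_self_iff.2 hw.1, inner_starProjection_left_eq_right,
      starProjection_eq_self_iff.2 hw.2, sub_self]

theorem Compatible.inf_left [S.HasOrthogonalProjection] [T.HasOrthogonalProjection]
    [U.HasOrthogonalProjection] (hST : Compatible S T) (hSU : Compatible S U)
    (hTU : Compatible T U) : Compatible (S ⊓ T) U := by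
  rw [compatible_iff_commute, hST.starProjection_inf]
  exact Commute.mul_left (compatible_iff_commute.1 hSU) (compatible_iff_commute.1 hTU)

theorem compatible_of_mul_starProjection_eq [S.HasOrthogonalProjection]
    [T.HasOrthogonalProjection] [U.HasOrthogonalProjection] (hUT : Compatible U T)
    (h : S.starProjection * T.starProjection = U.starProjection * T.starProjection) :
    Compatible S T := by
  rw [compatible_iff_commute] at hUT ⊢
  have hstar (V : Submodule ℂ H) [V.HasOrthogonalProjection] :
      star V.starProjection = V.starProjection :=
    (isSelfAdjoint_starProjection V).star_eq
  calc S.starProjection * T.starProjection = U.starProjection * T.starProjection := h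
    _ = T.starProjection * U.starProjection := hUT.eq
    _ = star (U.starProjection * T.starProjection) := by rw [star_mul, hstar, hstar]
    _ = star (S.starProjection * T.starProjection) := by rw [h]
    _ = T.starProjection * S.starProjection := by rw [star_mul, hstar, hstar]

theorem compatible_of_inf_eq_of_inf_le [X.HasOrthogonalProjection] [Y.HasOrthogonalProjection]
    [Z.HasOrthogonalProjection] [Z'.HasOrthogonalProjection]
    (hXZ : Compatible X Z) (hXZ' : Compatible X Z') (hZY : Compatible Z Y)
    (hZ'Y : Compatible Z' Y) (hZZ' : Compatible Z Z') (hXZ_eq : X ⊓ Z = Z ⊓ Z')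
    (hXZ'_le : X ⊓ Z' ≤ Z) (hYZ : Y ⊓ Zᗮ ≤ Z') : Compatible X Y := by
  refine compatible_of_mul_starProjection_eq (hZZ'.inf_left hZY hZ'Y) ?_
  have hvanish : X.starProjection * (Y ⊓ Zᗮ).starProjection = 0 := by
    have hle : Z'.starProjection * (Y ⊓ Zᗮ).starProjection = (Y ⊓ Zᗮ).starProjection := by
      ext x
      exact starProjection_eq_self_iff.2 (hYZ (starProjection_apply_mem _ x))
    have hortho : X ⊓ Z' ⟂ Y ⊓ Zᗮ := (isOrtho_orthogonal_right Z).mono hXZ'_le inf_le_right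
    rw [← hle, ← mul_assoc, ← hXZ'.starProjection_inf]
    exact hortho.starProjection_comp_starProjection
  calc X.starProjection * Y.starProjection
      = X.starProjection * (Y.starProjection * Z.starProjection + (Y ⊓ Zᗮ).starProjection) := by
        rw [hZY.symm.orthogonal_right.starProjection_inf, starProjection_orthogonal', mul_sub,
          mul_one, add_sub_cancel]
    _ = (X ⊓ Z).starProjection * Y.starProjection := by
        rw [mul_add, hvanish, add_zero, ← (compatible_iff_commute.1 hZY).eq, ← mul_assoc,
          hXZ.starProjection_inf]
    _ = (Z ⊓ Z').starProjection * Y.starProjection := by simp only [hXZ_eq]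

theorem Compatible.inf_le_or_inf_orthogonal_le [FiniteDimensional ℂ Z] [S.HasOrthogonalProjection]
    [Z'.HasOrthogonalProjection] (hZS : Compatible Z S)
    (hZZ' : Compatible Z Z') (hSZ' : Compatible S Z')
    (hdim : finrank ℂ ↥(Z ⊓ Z') ≤ finrank ℂ ↥(Z ⊓ S)) (hE : finrank ℂ ↥(Z ⊓ Z'ᗮ) ≤ 1) :
    Z ⊓ Z' ≤ S ∨ Z ⊓ Z'ᗮ ≤ S := by
  have hsplit := (hZS.inf_left hZZ' hSZ').finrank_inf_add_finrank_inf_orthogonal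
  rw [inf_right_comm Z S Z', inf_right_comm Z S Z'ᗮ] at hsplit
  have hle (A : Submodule ℂ H) [FiniteDimensional ℂ A] (h : finrank ℂ A ≤ finrank ℂ ↥(A ⊓ S)) :
      A ≤ S :=
    inf_eq_left.1 (eq_of_le_of_finrank_le inf_le_left h)
  have h₁ := finrank_mono (inf_le_left : Z ⊓ Z' ⊓ S ≤ Z ⊓ Z')
  have h₂ := finrank_mono (inf_le_left : Z ⊓ Z'ᗮ ⊓ S ≤ Z ⊓ Z'ᗮ)
  by_cases h₀ : finrank ℂ ↥(Z ⊓ Z'ᗮ ⊓ S) = 0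
  · exact Or.inl (hle _ (by omega))
  · exact Or.inr (hle _ (by omega))

theorem OrthoAdjacent.inf_le_or_inf_orthogonal_le (hZ : IsDim k Z) (hZ' : IsDim k Z')
    [S.HasOrthogonalProjection] (hZZ' : OrthoAdjacent k Z Z') (hZS : OrthoAdjacent k Z S)
    (hZ'S : Compatible Z' S) : Z ⊓ Z' ≤ S ∨ Z ⊓ Z'ᗮ ≤ S :=
  have := hZ.1
  have := hZ'.1
  hZS.2.inf_le_or_inf_orthogonal_le hZZ'.2 hZ'S.symm (by rw [hZZ'.1.2, hZS.1.2])
    (hZZ'.symm.finrank_inf_orthogonal hZ' hZ).le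

theorem OrthoAdjacent.compatible_of_inf_le_of_inf_orthogonal_le (hZ : IsDim k Z) (hZ' : IsDim k Z')
    (hY : IsDim k Y) [X.HasOrthogonalProjection]
    (hZZ' : OrthoAdjacent k Z Z') (hZX : OrthoAdjacent k Z X) (hZ'X : OrthoAdjacent k Z' X)
    (hZY : OrthoAdjacent k Z Y) (hZ'Y : Compatible Z' Y) (hD : Z' ⊓ Z ≤ X)
    (hE : Z' ⊓ Zᗮ ≤ Y) : Compatible X Y := by
  have := hZ.1
  have := hZ'.1
  have := hY.1
  have hXZ : X ⊓ Z = Z ⊓ Z' := by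
    rw [inf_comm, hZX.1.inf_eq_of_le hZ hZZ'.1 (inf_comm Z Z' ▸ hD)]
  have hXZ' : X ⊓ Z' ≤ Z := by
    rw [inf_comm, hZ'X.1.inf_eq_of_le hZ' hZZ'.symm.1 hD]
    exact inf_le_right
  have hYZ : Y ⊓ Zᗮ ≤ Z' := by
    have hEq : Z' ⊓ Zᗮ = Y ⊓ Zᗮ := eq_of_le_of_finrank_eq (le_inf hE inf_le_right)
      (by rw [hZZ'.finrank_inf_orthogonal hZ hZ', hZY.finrank_inf_orthogonal hZ hY])
    exact hEq ▸ inf_le_left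
  exact compatible_of_inf_eq_of_inf_le hZX.2.symm hZ'X.2.symm hZY.2 hZ'Y hZZ'.2 hXZ hXZ' hYZ

end

/-- Let `X, Y` be `k`-dimensional subspaces of `H` with `dim (X ∩ Y) = k - 2`. If there exist
two ortho-adjacent `k`-dimensional subspaces `Z, Z'` each ortho-adjacent to both `X, Y`,
then `X` and `Y` are compatible. -/
theorem compatible_of_orthoAdjacent_pair
    (k : ℕ) (hk : 2 ≤ k) (X Y : Submodule ℂ H) (hX : IsDim k X) (hY : IsDim k Y)
    (hint : Module.finrank ℂ ↥(X ⊓ Y) = k - 2)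
    (Z Z' : Submodule ℂ H) (hZ : IsDim k Z) (hZ' : IsDim k Z')
    (hZZ' : OrthoAdjacent k Z Z')
    (hZX : OrthoAdjacent k Z X) (hZY : OrthoAdjacent k Z Y)
    (hZ'X : OrthoAdjacent k Z' X) (hZ'Y : OrthoAdjacent k Z' Y) :
    Compatible X Y := by
  have := hX.1
  have := hY.1
  have := hZ.1
  have hXY : X ⊓ Y ≤ Z := inf_le_of_finrank_add_le (by rw [hint, hZ.2, hZX.1.2, hZY.1.2]; omega)
  have hE : finrank ℂ ↥(Z' ⊓ Zᗮ) = 1 := hZZ'.finrank_inf_orthogonal hZ hZ'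
  rcases hZZ'.symm.inf_le_or_inf_orthogonal_le hZ' hZ hZ'X hZX.2 with hDX | hEX <;>
    rcases hZZ'.symm.inf_le_or_inf_orthogonal_le hZ' hZ hZ'Y hZY.2 with hDY | hEY
  · have := finrank_mono (le_inf hDX hDY)
    rw [hZZ'.symm.1.2, hint] at this
    omega
  · exact hZZ'.compatible_of_inf_le_of_inf_orthogonal_le hZ hZ' hY hZX hZ'X hZY hZ'Y.2 hDX hEY
  · exact (hZZ'.compatible_of_inf_le_of_inf_orthogonal_le hZ hZ' hX hZY hZ'Y hZX hZ'X.2 hDY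
      hEX).symm
  · have hbot : Z' ⊓ Zᗮ ≤ Z ⊓ Zᗮ := le_inf ((le_inf hEX hEY).trans hXY) inf_le_right
    rw [inf_orthogonal_eq_bot, le_bot_iff] at hbot
    rw [hbot, finrank_bot] at hE
    exact absurd hE zero_ne_one

end
end

section
/- Let H be a complex Hilbert space, let k be an integer with 4 ≤ 2k ≤ dim H and k ≤ dim H − 4, and let X, Y be k-dimensional subspaces of H whose distance in the ortho-Grassmann graph Γ⊥_k(H) equals 2. Then X and Y are adjacent and non-compatible if and only if there are infinitely many k-dimensional subspaces Z of H ortho-adjacent to both X and Y and such that there are infinitely many k-dimensional subspaces Z' of H ortho-adjacent to each of X, Y and Z. -/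
noncomputable section

open scoped Classical

variable {H : Type*} [NormedAddCommGroup H] [InnerProductSpace ℂ H] [CompleteSpace H]

/-!
If `X ⊓ Y` is a hyperplane of `X` and `Y`, then `Z = (X ⊓ Y) ⊔ ℂ ∙ v` with `v ⟂ X ⊔ Y` is
ortho-adjacent to `X` and `Y`, and `Z' = (X ⊓ Y) ⊔ ℂ ∙ w` with `w ⟂ X ⊔ Y ⊔ ℂ ∙ v` is
ortho-adjacent to `X`, `Y` and `Z`; since `dim H ≥ k + 4` there are infinitely many lines to
choose `v` and `w` from.

If `X ≠ Y` are not adjacent, a common neighbour `Z` is spanned by its hyperplanes `Z ⊓ X` and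
`Z ⊓ Y`, so `dim (X ⊓ Y) = k - 2` and `Z ≤ X ⊔ Y`, which has dimension `k + 2`. A common
ortho-neighbour `Z'` of `X`, `Y`, `Z` meets `X` or `Y`, say `X`, in the same hyperplane `A` as `Z`
does (otherwise `Z ⊔ Z'` would contain `X ⊔ Y`). Compatibility with `X` and `Z` makes the line
`Aᗮ ⊓ Z'` orthogonal to `X ⊔ Z`, and inside `X ⊔ Y` only one line is, so there are at most two
such `Z'`. Finally, adjacent `X`, `Y` at distance `2` cannot be compatible.
-/

open Module Submodule

section Compatibility

variable {E : Type*} [NormedAddCommGroup E] [InnerProductSpace ℂ E]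

lemma projOn_eq_starProjection_s13 (U : Submodule ℂ E) [U.HasOrthogonalProjection] :
    projOn U = U.starProjection := by
  rw [projOn, dif_pos ‹_›]
  rfl

lemma compatible_iff_commute_s13 {A B : Submodule ℂ E} [A.HasOrthogonalProjection]
    [B.HasOrthogonalProjection] :
    Compatible A B ↔ Commute A.starProjection B.starProjection := by
  rw [Compatible, projOn_eq_starProjection_s13, projOn_eq_starProjection_s13]
  rfl

lemma Compatible.starProjection_mem {A B : Submodule ℂ E} [A.HasOrthogonalProjection]
    [B.HasOrthogonalProjection] (h : Compatible A B) {a : E} (ha : a ∈ A) :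
    B.starProjection a ∈ A := by
  have hcomm := congr($((compatible_iff_commute_s13.1 h).eq) a)
  simp only [mul_apply_eq_comp, starProjection_eq_self_iff.2 ha] at hcomm
  exact hcomm ▸ A.starProjection_apply_mem _

lemma Compatible.orthogonal_inf_inf_eq {A B : Submodule ℂ E} [A.HasOrthogonalProjection]
    [B.HasOrthogonalProjection] (h : Compatible A B) : (A ⊓ B)ᗮ ⊓ A = Bᗮ ⊓ A := by
  refine le_antisymm (fun a ⟨haAB, ha⟩ => ⟨?_, ha⟩)
    (inf_le_inf_right _ (orthogonal_le inf_le_right))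
  set p := B.starProjection a
  have hres : a - p ∈ Bᗮ := B.sub_starProjection_mem_orthogonal a
  have hp : p ∈ (A ⊓ B) ⊓ (A ⊓ B)ᗮ :=
    ⟨⟨h.starProjection_mem ha, B.starProjection_apply_mem a⟩,
      by simpa using sub_mem haAB (orthogonal_le inf_le_right hres)⟩
  rw [inf_orthogonal_eq_bot, mem_bot] at hp
  simpa [hp] using hres

lemma starProjection_sup_of_isOrtho {𝕜 F : Type*} [RCLike 𝕜] [NormedAddCommGroup F]
    [InnerProductSpace 𝕜 F] {A B : Submodule 𝕜 F} [A.HasOrthogonalProjection]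
    [B.HasOrthogonalProjection] [(A ⊔ B).HasOrthogonalProjection] (h : A ⟂ B) :
    (A ⊔ B).starProjection = A.starProjection + B.starProjection := by
  ext x
  refine eq_starProjection_of_mem_orthogonal
    (add_mem (mem_sup_left (A.starProjection_apply_mem x))
      (mem_sup_right (B.starProjection_apply_mem x))) ?_
  rw [← inf_orthogonal]
  constructor
  · simpa [sub_add_eq_sub_sub] using
      sub_mem (A.sub_starProjection_mem_orthogonal x) (h.ge (B.starProjection_apply_mem x))
  · simpa [sub_add_eq_sub_sub, sub_right_comm] using
      sub_mem (B.sub_starProjection_mem_orthogonal x) (h.le (A.starProjection_apply_mem x))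

lemma compatible_sup_of_le_of_isOrtho {A B X : Submodule ℂ E} [A.HasOrthogonalProjection]
    [B.HasOrthogonalProjection] [X.HasOrthogonalProjection] [(A ⊔ B).HasOrthogonalProjection]
    (hA : A ≤ X) (hB : B ⟂ X) : Compatible (A ⊔ B) X := by
  rw [compatible_iff_commute_s13, starProjection_sup_of_isOrtho (hB.symm.mono_left hA)]
  refine Commute.add_left (ContinuousLinearMap.ext fun x => ?_) ?_
  · simp only [mul_apply_eq_comp]
    rw [starProjection_eq_self_iff.2 (hA (A.starProjection_apply_mem x))]
    exact congr($(starProjection_comp_starProjection_of_le hA) x)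
  · simp only [Commute, SemiconjBy, ContinuousLinearMap.mul_def,
      hB.starProjection_comp_starProjection, hB.symm.starProjection_comp_starProjection]

end Compatibility

section Dimension

variable {K V : Type*} [DivisionRing K] [AddCommGroup V] [Module K V]

lemma sup_eq_of_ne_of_finrank_add_one {A B Z : Submodule K V} [FiniteDimensional K Z]
    (hA : A ≤ Z) (hB : B ≤ Z) (hAB : A ≠ B) (hAZ : finrank K A + 1 = finrank K Z)
    (hBZ : finrank K B + 1 = finrank K Z) : A ⊔ B = Z := by
  have : FiniteDimensional K A := finiteDimensional_of_le hA
  have : FiniteDimensional K ↥(A ⊔ B) := finiteDimensional_of_le (sup_le hA hB)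
  have hBA : ¬ B ≤ A := fun h =>
    hAB (eq_of_le_of_finrank_eq h (by omega) : B = A).symm
  have := finrank_lt_finrank_of_lt (lt_of_le_of_ne le_sup_left
    fun h => hBA (h ▸ le_sup_right) : A < A ⊔ B)
  exact eq_of_le_of_finrank_le (sup_le hA hB) (by omega)

lemma finrank_inf_add_two_le {k : ℕ} {X Y : Submodule K V} [FiniteDimensional K X]
    [FiniteDimensional K Y] (hX : finrank K X = k) (hY : finrank K Y = k) (hXY : X ≠ Y)
    (hne : finrank K ↥(X ⊓ Y) ≠ k - 1) : finrank K ↥(X ⊓ Y) + 2 ≤ k := by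
  have hle := finrank_mono (inf_le_left : X ⊓ Y ≤ X)
  suffices finrank K ↥(X ⊓ Y) ≠ k by omega
  intro h
  exact hXY ((eq_of_le_of_finrank_eq inf_le_left (by omega)).symm.trans
    (eq_of_le_of_finrank_eq inf_le_right (by omega)))

lemma inf_sup_inf_eq_of_finrank {k : ℕ} {X Y W : Submodule K V} [FiniteDimensional K X]
    [FiniteDimensional K W]
    (hXY : finrank K ↥(X ⊓ Y) + 2 ≤ k) (hW : finrank K W = k)
    (hWX : finrank K ↥(W ⊓ X) = k - 1) (hWY : finrank K ↥(W ⊓ Y) = k - 1) :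
    W ⊓ X ⊔ W ⊓ Y = W := by
  refine sup_eq_of_ne_of_finrank_add_one inf_le_left inf_le_left (fun h => ?_) (by omega)
    (by omega)
  have := finrank_mono (le_inf inf_le_right (h ▸ inf_le_right) : W ⊓ X ≤ X ⊓ Y)
  omega

lemma inf_eq_or_inf_eq_of_finrank {k : ℕ} {X Y Z Z' : Submodule K V} [FiniteDimensional K X]
    [FiniteDimensional K Y] [FiniteDimensional K Z] [FiniteDimensional K Z']
    (hX : finrank K X = k) (hY : finrank K Y = k) (hZ : finrank K Z = k)
    (hZ' : finrank K Z' = k) (hXY : finrank K ↥(X ⊓ Y) + 2 ≤ k)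
    (hZX : finrank K ↥(Z ⊓ X) = k - 1) (hZY : finrank K ↥(Z ⊓ Y) = k - 1)
    (hZ'X : finrank K ↥(Z' ⊓ X) = k - 1) (hZ'Y : finrank K ↥(Z' ⊓ Y) = k - 1)
    (hZZ' : finrank K ↥(Z ⊓ Z') = k - 1) : Z' ⊓ X = Z ⊓ X ∨ Z' ⊓ Y = Z ⊓ Y := by
  by_contra! ⟨hneX, hneY⟩
  have hX' : Z ⊓ X ⊔ Z' ⊓ X = X :=
    sup_eq_of_ne_of_finrank_add_one inf_le_right inf_le_right hneX.symm (by omega) (by omega)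
  have hY' : Z ⊓ Y ⊔ Z' ⊓ Y = Y :=
    sup_eq_of_ne_of_finrank_add_one inf_le_right inf_le_right hneY.symm (by omega) (by omega)
  have hle : X ⊔ Y ≤ Z ⊔ Z' := by
    rw [← hX', ← hY']
    exact sup_le (sup_le_sup inf_le_left inf_le_left) (sup_le_sup inf_le_left inf_le_left)
  have := finrank_mono hle
  have := finrank_sup_add_finrank_inf_eq X Y
  have := finrank_sup_add_finrank_inf_eq Z Z'
  omega

lemma exists_linearIndependent_pair_mem {W : Submodule K V} (hW : 1 < Module.rank K W) :
    ∃ a ∈ W, ∃ b ∈ W, LinearIndependent K ![a, b] := by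
  have : Nontrivial W := rank_pos_iff_nontrivial.1 (zero_lt_one.trans hW)
  obtain ⟨x, hx⟩ := exists_ne (0 : W)
  obtain ⟨y, hxy⟩ := exists_linearIndependent_pair_of_one_lt_rank hW hx
  exact ⟨x, x.2, y, y.2, LinearIndependent.pair_iff.2 fun s t hst =>
    LinearIndependent.pair_iff.1 hxy s t (Subtype.ext (by simpa using hst))⟩

end Dimension

section Grassmann

variable {E : Type*} [NormedAddCommGroup E] [InnerProductSpace ℂ E]

lemma one_lt_rank_orthogonal (F : Submodule ℂ E) [FiniteDimensional ℂ F]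
    (h : (finrank ℂ F : Cardinal) + 2 ≤ Module.rank ℂ E) : 1 < Module.rank ℂ Fᗮ := by
  have hsum := rank_sup_add_rank_inf_eq F Fᗮ
  rw [sup_orthogonal_of_hasOrthogonalProjection, inf_orthogonal_eq_bot, rank_top, rank_bot,
    add_zero, ← finrank_eq_rank ℂ F] at hsum
  by_contra! hle
  have : ((finrank ℂ F + 2 : ℕ) : Cardinal) ≤ (finrank ℂ F + 1 : ℕ) := by
    push_cast
    exact h.trans (hsum ▸ by gcongr)
  have := Nat.cast_le.1 this
  omega

lemma infinite_of_forall_sup_span_singleton_mem {N W : Submodule ℂ E} (hW : W ≤ Nᗮ)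
    (hrank : 1 < Module.rank ℂ W) {S : Set (Submodule ℂ E)}
    (hS : ∀ w ∈ W, w ≠ 0 → N ⊔ ℂ ∙ w ∈ S) : S.Infinite := by
  obtain ⟨a, ha, b, hb, hab⟩ := exists_linearIndependent_pair_mem hrank
  have hmem (c : ℂ) : a + c • b ∈ W := add_mem ha (smul_mem _ c hb)
  have hne (c : ℂ) : a + c • b ≠ 0 := fun h0 =>
    one_ne_zero (LinearIndependent.pair_iff.1 hab 1 c (by simpa using h0)).1
  have hline (c : ℂ) : (N ⊔ ℂ ∙ (a + c • b)) ⊓ Nᗮ = ℂ ∙ (a + c • b) := by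
    have hle : (ℂ ∙ (a + c • b)) ≤ Nᗮ := (span_singleton_le_iff_mem _ _).2 (hW (hmem c))
    rw [sup_comm, sup_inf_assoc_of_le _ hle, inf_orthogonal_eq_bot, sup_bot_eq]
  refine Set.infinite_of_injective_forall_mem (fun c₁ c₂ h => ?_) fun c => hS _ (hmem c) (hne c)
  have hspan : a + c₁ • b ∈ ℂ ∙ (a + c₂ • b) := by
    rw [← hline c₂, ← h, hline c₁]
    exact mem_span_singleton_self _
  obtain ⟨t, ht⟩ := mem_span_singleton.1 hspan
  obtain ⟨h1, h2⟩ := LinearIndependent.pair_iff.1 hab (t - 1) (t * c₂ - c₁) (by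
    rw [sub_smul, sub_smul, one_smul, ← smul_smul, ← sub_eq_zero.2 ht]
    module)
  rw [sub_eq_zero.1 h1, one_mul] at h2
  exact (sub_eq_zero.1 h2).symm

lemma isDim_sup_span_singleton {k : ℕ} {N : Submodule ℂ E} [FiniteDimensional ℂ N]
    (hN : finrank ℂ N + 1 = k) {v : E} (hv : v ∈ Nᗮ) (hv0 : v ≠ 0) :
    IsDim k (N ⊔ ℂ ∙ v) := by
  have hdisj : N ⊓ ℂ ∙ v = ⊥ :=
    (isOrtho_iff_le.2 ((span_singleton_le_iff_mem _ _).2 hv)).symm.disjoint.eq_bot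
  have := finrank_sup_add_finrank_inf_eq N (ℂ ∙ v)
  rw [hdisj, finrank_bot, finrank_span_singleton hv0] at this
  exact ⟨inferInstance, by omega⟩

lemma orthoAdjacent_sup_span_singleton {k : ℕ} {N X : Submodule ℂ E} [FiniteDimensional ℂ N]
    [FiniteDimensional ℂ X] (hNX : N ≤ X) (hN : finrank ℂ N = k - 1) {v : E} (hv : v ∈ Xᗮ)
    (hv0 : v ≠ 0) : OrthoAdjacent k (N ⊔ ℂ ∙ v) X := by
  have hvX : (ℂ ∙ v) ⟂ X := isOrtho_iff_le.2 ((span_singleton_le_iff_mem _ _).2 hv)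
  have hinf : (N ⊔ ℂ ∙ v) ⊓ X = N := by
    rw [sup_inf_assoc_of_le _ hNX, hvX.disjoint.eq_bot, sup_bot_eq]
  refine ⟨⟨fun h => hv0 ?_, by rw [hinf, hN]⟩, compatible_sup_of_le_of_isOrtho hNX hvX⟩
  exact disjoint_def.1 X.orthogonal_disjoint v (h ▸ mem_sup_right (mem_span_singleton_self v)) hv

lemma infinite_setOf_common_orthoAdjacent {k : ℕ} (hk : 1 ≤ k)
    (hrank : (k : Cardinal) + 4 ≤ Module.rank ℂ E) {X Y : Submodule ℂ E} (hX : IsDim k X)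
    (hY : IsDim k Y) (hXY : finrank ℂ ↥(X ⊓ Y) = k - 1) :
    {Z : Submodule ℂ E | IsDim k Z ∧ OrthoAdjacent k Z X ∧ OrthoAdjacent k Z Y ∧
      {Z' : Submodule ℂ E | IsDim k Z' ∧ OrthoAdjacent k Z' X ∧ OrthoAdjacent k Z' Y ∧
        OrthoAdjacent k Z' Z}.Infinite}.Infinite := by
  obtain ⟨_, hXk⟩ := hX
  obtain ⟨_, hYk⟩ := hY
  have hN : finrank ℂ ↥(X ⊓ Y) + 1 = k := by omega
  have hrank' (F : Submodule ℂ E) [FiniteDimensional ℂ F] (hF : finrank ℂ F ≤ k + 2) :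
      1 < Module.rank ℂ Fᗮ :=
    one_lt_rank_orthogonal F (le_trans (by exact_mod_cast (by omega : finrank ℂ F + 2 ≤ k + 4))
      hrank)
  have hXY' : finrank ℂ ↥(X ⊔ Y) = k + 1 := by
    have := finrank_sup_add_finrank_inf_eq X Y
    omega
  refine infinite_of_forall_sup_span_singleton_mem (N := X ⊓ Y)
    (orthogonal_le (inf_le_left.trans le_sup_left)) (hrank' (X ⊔ Y) (by omega))
    fun v hv hv0 => ?_
  have hZF : (X ⊓ Y) ⊔ ℂ ∙ v ≤ X ⊔ Y ⊔ ℂ ∙ v :=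
    sup_le_sup_right (inf_le_left.trans le_sup_left) _
  have hF : finrank ℂ ↥(X ⊔ Y ⊔ ℂ ∙ v) ≤ k + 2 := by
    have := finrank_add_le_finrank_add_finrank (X ⊔ Y) (ℂ ∙ v)
    rw [finrank_span_singleton hv0] at this
    omega
  refine ⟨isDim_sup_span_singleton hN (orthogonal_le (inf_le_left.trans le_sup_left) hv) hv0,
    orthoAdjacent_sup_span_singleton inf_le_left hXY (orthogonal_le le_sup_left hv) hv0,
    orthoAdjacent_sup_span_singleton inf_le_right hXY (orthogonal_le le_sup_right hv) hv0,
    infinite_of_forall_sup_span_singleton_mem (N := X ⊓ Y)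
      (orthogonal_le (le_sup_left.trans hZF)) (hrank' _ hF) fun w hw hw0 => ?_⟩
  have hwXY : w ∈ (X ⊔ Y)ᗮ := orthogonal_le le_sup_left hw
  exact ⟨isDim_sup_span_singleton hN (orthogonal_le (le_sup_left.trans hZF) hw) hw0,
    orthoAdjacent_sup_span_singleton inf_le_left hXY (orthogonal_le le_sup_left hwXY) hw0,
    orthoAdjacent_sup_span_singleton inf_le_right hXY (orthogonal_le le_sup_right hwXY) hw0,
    orthoAdjacent_sup_span_singleton le_sup_left hXY (orthogonal_le hZF hw) hw0⟩

lemma eq_sup_orthogonal_inf_of_compatible {A X Z Z' V : Submodule ℂ E} [FiniteDimensional ℂ Z']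
    [FiniteDimensional ℂ V] (hZ'X : Compatible Z' X) (hZ'Z : Compatible Z' Z) (hX : Z' ⊓ X = A)
    (hZ : Z' ⊓ Z = A) (hZ'V : Z' ≤ V) (hXZV : X ⊔ Z ≤ V)
    (hV : finrank ℂ ↥(X ⊔ Z) + 1 = finrank ℂ V) (hA : finrank ℂ A + 1 = finrank ℂ Z') :
    Z' = A ⊔ (X ⊔ Z)ᗮ ⊓ V := by
  have : FiniteDimensional ℂ X := finiteDimensional_of_le (le_sup_left.trans hXZV)
  have : FiniteDimensional ℂ Z := finiteDimensional_of_le (le_sup_right.trans hXZV)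
  have : FiniteDimensional ℂ ↥(X ⊔ Z) := finiteDimensional_of_le hXZV
  have hAZ' : A ≤ Z' := hX ▸ inf_le_left
  have : FiniteDimensional ℂ A := finiteDimensional_of_le hAZ'
  have hXo : Aᗮ ⊓ Z' = Xᗮ ⊓ Z' := hX ▸ hZ'X.orthogonal_inf_inf_eq
  have hZo : Aᗮ ⊓ Z' = Zᗮ ⊓ Z' := hZ ▸ hZ'Z.orthogonal_inf_inf_eq
  have hle : Aᗮ ⊓ Z' ≤ (X ⊔ Z)ᗮ ⊓ V := by
    rw [← inf_orthogonal]
    exact le_inf (le_inf (hXo ▸ inf_le_left) (hZo ▸ inf_le_left)) (inf_le_right.trans hZ'V)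
  have h1 := finrank_add_inf_finrank_orthogonal hAZ'
  have h2 := finrank_add_inf_finrank_orthogonal hXZV
  rw [← eq_of_le_of_finrank_le hle (by omega)]
  exact (sup_orthogonal_inf_of_hasOrthogonalProjection hAZ').symm

lemma finite_setOf_common_orthoAdjacent {k : ℕ} {X Y Z : Submodule ℂ E} (hX : IsDim k X)
    (hY : IsDim k Y) (hZ : IsDim k Z) (hXY : finrank ℂ ↥(X ⊓ Y) + 2 ≤ k)
    (hZX : AdjacentSub k Z X) (hZY : AdjacentSub k Z Y) :
    {Z' : Submodule ℂ E | IsDim k Z' ∧ OrthoAdjacent k Z' X ∧ OrthoAdjacent k Z' Y ∧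
      OrthoAdjacent k Z' Z}.Finite := by
  have := hX.1
  have := hY.1
  have := hZ.1
  have hZV : Z ≤ X ⊔ Y :=
    inf_sup_inf_eq_of_finrank hXY hZ.2 hZX.2 hZY.2 ▸ sup_le_sup inf_le_right inf_le_right
  have hV : finrank ℂ ↥(X ⊔ Y) = k + 2 := by
    have h1 := finrank_sup_add_finrank_inf_eq (Z ⊓ X) (Z ⊓ Y)
    rw [inf_sup_inf_eq_of_finrank hXY hZ.2 hZX.2 hZY.2, hZ.2, hZX.2, hZY.2] at h1
    have h2 := finrank_mono (inf_le_inf inf_le_right inf_le_right : Z ⊓ X ⊓ (Z ⊓ Y) ≤ X ⊓ Y)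
    have h3 := finrank_sup_add_finrank_inf_eq X Y
    rw [hX.2, hY.2] at h3
    omega
  have hside {W : Submodule ℂ E} (hW : IsDim k W) (hWV : W ≤ X ⊔ Y) (hZW : AdjacentSub k Z W)
      {Z' : Submodule ℂ E} (hZ' : IsDim k Z') (hZ'V : Z' ≤ X ⊔ Y) (hZ'W : Compatible Z' W)
      (hZ'Z : OrthoAdjacent k Z' Z) (heq : Z' ⊓ W = Z ⊓ W) :
      Z' = Z ⊓ W ⊔ (W ⊔ Z)ᗮ ⊓ (X ⊔ Y) := by
    have := hW.1
    have := hZ'.1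
    have hZ'Zinf : Z' ⊓ Z = Z ⊓ W :=
      (eq_of_le_of_finrank_eq (le_inf (heq ▸ inf_le_left) inf_le_left)
        (by rw [hZ'Z.1.2, hZW.2])).symm
    have hWZ := finrank_sup_add_finrank_inf_eq W Z
    rw [inf_comm, hW.2, hZ.2, hZW.2] at hWZ
    exact eq_sup_orthogonal_inf_of_compatible hZ'W hZ'Z.2 heq hZ'Zinf hZ'V (sup_le hWV hZV)
      (by omega) (by rw [hZ'.2, hZW.2]; omega)
  refine ((Set.finite_singleton (Z ⊓ Y ⊔ (Y ⊔ Z)ᗮ ⊓ (X ⊔ Y))).insert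
    (Z ⊓ X ⊔ (X ⊔ Z)ᗮ ⊓ (X ⊔ Y))).subset ?_
  rintro Z' ⟨hZ', hZ'X, hZ'Y, hZ'Z⟩
  have := hZ'.1
  have hZ'V : Z' ≤ X ⊔ Y :=
    inf_sup_inf_eq_of_finrank hXY hZ'.2 hZ'X.1.2 hZ'Y.1.2 ▸ sup_le_sup inf_le_right inf_le_right
  rcases inf_eq_or_inf_eq_of_finrank hX.2 hY.2 hZ.2 hZ'.2 hXY hZX.2 hZY.2 hZ'X.1.2 hZ'Y.1.2
    (by rw [inf_comm]; exact hZ'Z.1.2) with h | h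
  · exact Or.inl (hside hX le_sup_left hZX hZ' hZ'V hZ'X.2 hZ'Z h)
  · exact Or.inr (hside hY le_sup_right hZY hZ' hZ'V hZ'Y.2 hZ'Z h)

end Grassmann

theorem adjacent_noncompatible_iff_infinite_infinite_general
    (k : ℕ) (hk : 2 ≤ k)
    (hk4 : (k : Cardinal) + 4 ≤ Module.rank ℂ H)
    (X Y : Submodule ℂ H) (hX : IsDim k X) (hY : IsDim k Y)
    (hdist : (orthoGrassmannGraph H k).dist ⟨X, hX⟩ ⟨Y, hY⟩ = 2) :
    (AdjacentSub k X Y ∧ ¬ Compatible X Y) ↔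
      {Z : Submodule ℂ H | IsDim k Z ∧ OrthoAdjacent k Z X ∧ OrthoAdjacent k Z Y ∧
        {Z' : Submodule ℂ H | IsDim k Z' ∧ OrthoAdjacent k Z' X ∧ OrthoAdjacent k Z' Y ∧
          OrthoAdjacent k Z' Z}.Infinite}.Infinite := by
  have := hX.1
  have := hY.1
  have hXY : X ≠ Y := by
    rintro rfl
    rw [SimpleGraph.dist_self] at hdist
    omega
  have hnadj : ¬ OrthoAdjacent k X Y := fun h => by
    rw [SimpleGraph.dist_eq_one_iff_adj.2 (show (orthoGrassmannGraph H k).Adj ⟨X, hX⟩ ⟨Y, hY⟩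
      from h)] at hdist
    omega
  refine ⟨fun ⟨hadj, _⟩ => infinite_setOf_common_orthoAdjacent (by omega) hk4 hX hY hadj.2,
    fun hinf => ?_⟩
  have hfr : finrank ℂ ↥(X ⊓ Y) = k - 1 := by
    by_contra hne
    obtain ⟨Z, hZ, hZX, hZY, hZinf⟩ := hinf.nonempty
    exact hZinf (finite_setOf_common_orthoAdjacent hX hY hZ
      (finrank_inf_add_two_le hX.2 hY.2 hXY hne) hZX.1 hZY.1)
  exact ⟨⟨hXY, hfr⟩, fun hc => hnadj ⟨⟨hXY, hfr⟩, hc⟩⟩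

/-- Suppose `4 ≤ 2k ≤ dim H`, `k ≤ dim H - 4`, and let `X, Y` be `k`-dimensional subspaces
of `H` at distance `2` in `Γ⊥_k(H)`. Then `X, Y` are adjacent and non-compatible if and only
if there are infinitely many `k`-dimensional subspaces `Z` ortho-adjacent to both `X, Y` and
such that there are infinitely many `k`-dimensional subspaces `Z'` ortho-adjacent to each of
`X, Y, Z`. -/
theorem adjacent_noncompatible_iff_infinite_infinite
    (k : ℕ) (hk : 2 ≤ k) (h2k : 2 * (k : Cardinal) ≤ Module.rank ℂ H)
    (hk4 : (k : Cardinal) + 4 ≤ Module.rank ℂ H)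
    (X Y : Submodule ℂ H) (hX : IsDim k X) (hY : IsDim k Y)
    (hdist : (orthoGrassmannGraph H k).dist ⟨X, hX⟩ ⟨Y, hY⟩ = 2) :
    (AdjacentSub k X Y ∧ ¬ Compatible X Y) ↔
      {Z : Submodule ℂ H | IsDim k Z ∧ OrthoAdjacent k Z X ∧ OrthoAdjacent k Z Y ∧
        {Z' : Submodule ℂ H | IsDim k Z' ∧ OrthoAdjacent k Z' X ∧ OrthoAdjacent k Z' Y ∧
          OrthoAdjacent k Z' Z}.Infinite}.Infinite :=
  adjacent_noncompatible_iff_infinite_infinite_general k hk hk4 X Y hX hY hdist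

end
end
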